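/- For points p, q in the closed unit disk of ℝ² with p on the boundary circle and q ≠ 0, letting q̂ = q/‖q‖ denote the radial projection of q to the circle, the geodesic circle distance satisfies d_{S¹}(p, q̂) ≤ π·‖p − q‖ provided ‖q‖ ≤ 1. -/

import Mathlib

open Real

/-- Geodesic (arclength) distance on the unit circle in ℝ². -/
noncomputable def dS1 (x y : EuclideanSpace ℝ (Fin 2)) : ℝ :=
  Real.arccos (inner ℝ x y : ℝ)

/-- For `p` on the unit circle and `q ≠ 0` in the closed unit disk, letting
`q̂ = q/‖q‖` be the radial projection of `q` to the circle, we have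
`d_{S¹}(p, q̂) ≤ π·‖p − q‖`. -/
theorem geodesic_dist_to_radial_projection
    (p q : EuclideanSpace ℝ (Fin 2)) (hp : ‖p‖ = 1)
    (hq0 : q ≠ 0) (hq : ‖q‖ ≤ 1) :
    dS1 p (‖q‖⁻¹ • q) ≤ π * ‖p - q‖ := by
  have hr : (0:ℝ) < ‖q‖ := norm_pos_iff.2 hq0
  set r := ‖q‖ with hrdef
  set qh : EuclideanSpace ℝ (Fin 2) := r⁻¹ • q with hqh
  have hqhnorm : ‖qh‖ = 1 := by
    rw [hqh, norm_smul, norm_inv, Real.norm_eq_abs, abs_of_pos hr]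
    field_simp
    exact hrdef.symm
  set s : ℝ := inner ℝ p qh with hs
  have habs : |s| ≤ 1 := by
    have := abs_real_inner_le_norm p qh
    rw [hp, hqhnorm, one_mul] at this; exact this
  have hs1 : s ≤ 1 := (abs_le.1 habs).2
  have hsm1 : -1 ≤ s := (abs_le.1 habs).1
  -- inner p q = r * s
  have hinner : (inner ℝ p q : ℝ) = r * s := by
    rw [hs, hqh, real_inner_smul_right]
    field_simp
  set θ : ℝ := Real.arccos s with hθ
  have hθ0 : 0 ≤ θ := Real.arccos_nonneg s
  have hθπ : θ ≤ π := Real.arccos_le_pi s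
  have hcos : Real.cos θ = s := Real.cos_arccos hsm1 hs1
  -- sin(θ/2) bound: θ ≤ π * sin(θ/2)
  have hsin : θ / π ≤ Real.sin (θ / 2) := by
    simpa using Real.mul_le_sin (x := θ / 2) (by positivity) (by linarith)
  -- sin(θ/2) = sqrt((1 - s)/2)
  have hsinsq : Real.sin (θ / 2) ^ 2 = (1 - s) / 2 := by
    rw [Real.sin_sq_eq_half_sub]
    rw [show 2 * (θ / 2) = θ by ring, hcos]; ring
  -- ‖p - q‖ ^ 2 = 1 + r^2 - 2*r*s
  have hpq : ‖p - q‖ ^ 2 = 1 + r ^ 2 - 2 * (r * s) := by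
    rw [@norm_sub_sq_real, hp, hinner]; ring
  -- key: sin(θ/2) ≤ ‖p - q‖, by comparing squares
  have hkey : Real.sin (θ / 2) ≤ ‖p - q‖ := by
    have h1 : Real.sin (θ / 2) ^ 2 ≤ ‖p - q‖ ^ 2 := by
      rw [hsinsq, hpq]
      nlinarith [sq_nonneg (r - 1), mul_nonneg (mul_nonneg hr.le hr.le) (by linarith : 0 ≤ 1 + s),
        mul_nonneg hr.le (by linarith : 0 ≤ 1 - s)]
    have h2 : 0 ≤ Real.sin (θ / 2) :=
      Real.sin_nonneg_of_nonneg_of_le_pi (by linarith) (by linarith [Real.pi_pos])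
    nlinarith [norm_nonneg (p - q)]
  have : θ ≤ π * ‖p - q‖ := by
    have hπ := Real.pi_pos
    calc θ = π * (θ / π) := by field_simp
    _ ≤ π * Real.sin (θ / 2) := by nlinarith
    _ ≤ π * ‖p - q‖ := by nlinarith
  simpa [dS1, hθ, hs, hqh, hrdef] using this
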